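/- Let p/q have negative continued fraction expansion [a_1, ..., a_n] with all a_i ≥ 2. The total number of terms produced by Riemenschneider's dual expansion is l^ν = Σ_{i=1}^{n}(a_i - 1) - n + 1, i.e. the length of the expansion of p/(p-q) equals (a_1 - 1) + Σ_{i=2}^{n}(a_i - 2). -/

import Mathlib

/-- Evaluation of a negative (Hirzebruch–Jung) continued fraction. -/
def ncfEval : List ℤ → ℚ
  | [] => 0
  | [a] => (a : ℚ)
  | a :: rest => (a : ℚ) - 1 / ncfEval rest

/-- `L` is the negative continued fraction expansion of `r` with all coefficients `≥ 2`. -/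
def IsNCF (r : ℚ) (L : List ℤ) : Prop :=
  L ≠ [] ∧ (∀ a ∈ L, 2 ≤ a) ∧ ncfEval L = r

/-! For `x = p / q` the dual value `p / (p - q)` is `x / (x - 1)`, and its expansion is built
by recursion on the head coefficient. `[2]` is self-dual; raising the head `a ≥ 2` of an
expansion of `y` by one prepends a `2` to the dual, because `(y + 1) / y = 2 - 1 / (y / (y - 1))`;
and the dual of `2 :: M` is the dual of `M` with its head raised by one, because `x = 2 - 1 / y`
gives `x / (x - 1) = y / (y - 1) + 1`. Each step changes the length of the dual by exactly what it
adds to `∑ aᵢ - 2n`. Expansions with all entries `≥ 2` are unique, since the head of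
`[a₁, …, aₙ]` is the ceiling of its value, so the constructed dual is the given one. -/

section FieldIdentities

variable {K : Type*} [Field K]

theorem add_one_div_add_one_sub_one {y : K} (hy : y ≠ 0) :
    (y + 1) / (y + 1 - 1) = 2 - 1 / (y / (y - 1)) := by
  rw [add_sub_cancel_right, one_div_div]
  field_simp
  ring

theorem two_sub_inv_div_sub_one {y : K} (hy₀ : y ≠ 0) (hy₁ : y - 1 ≠ 0) :
    (2 - 1 / y) / (2 - 1 / y - 1) = y / (y - 1) + 1 := by
  rw [show (2 : K) - 1 / y - 1 = (y - 1) / y by field_simp; ring]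
  field_simp
  ring

end FieldIdentities

theorem ncfEval_cons {M : List ℤ} (hM : M ≠ []) (a : ℤ) :
    ncfEval (a :: M) = a - 1 / ncfEval M := by
  cases M with
  | nil => exact absurd rfl hM
  | cons b t => rfl

theorem ncfEval_add_one_cons (a : ℤ) (M : List ℤ) :
    ncfEval ((a + 1) :: M) = ncfEval (a :: M) + 1 := by
  cases M with
  | nil => simp [ncfEval]
  | cons b t =>
    rw [ncfEval_cons (List.cons_ne_nil b t), ncfEval_cons (List.cons_ne_nil b t)]
    push_cast
    ring

theorem one_lt_ncfEval {L : List ℤ} (hL : L ≠ []) (h2 : ∀ a ∈ L, 2 ≤ a) : 1 < ncfEval L := by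
  induction L with
  | nil => exact absurd rfl hL
  | cons a M ih =>
    have ha : (2 : ℚ) ≤ a := by exact_mod_cast h2 a List.mem_cons_self
    rcases eq_or_ne M [] with rfl | hM
    · simp only [ncfEval]
      linarith
    · have hy := ih hM fun b hb => h2 b (List.mem_cons_of_mem a hb)
      rw [ncfEval_cons hM]
      have : 1 / ncfEval M < 1 := (div_lt_one (by linarith)).2 hy
      linarith

theorem ncfEval_cons_lt {M : List ℤ} (hM₀ : M ≠ []) (hM : ∀ b ∈ M, 2 ≤ b) (a : ℤ) :
    ncfEval (a :: M) < a := by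
  have : 0 < 1 / ncfEval M := one_div_pos.2 (zero_lt_one.trans (one_lt_ncfEval hM₀ hM))
  rw [ncfEval_cons hM₀]
  linarith

theorem sub_one_lt_ncfEval_cons {M : List ℤ} (hM : ∀ b ∈ M, 2 ≤ b) (a : ℤ) :
    a - 1 < ncfEval (a :: M) := by
  rcases eq_or_ne M [] with rfl | hM₀
  · simp [ncfEval]
  · have hy := one_lt_ncfEval hM₀ hM
    have : 1 / ncfEval M < 1 := (div_lt_one (by linarith)).2 hy
    rw [ncfEval_cons hM₀]
    linarith

theorem ceil_ncfEval_cons {M : List ℤ} (hM : ∀ b ∈ M, 2 ≤ b) (a : ℤ) :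
    ⌈ncfEval (a :: M)⌉ = a := by
  refine Int.ceil_eq_iff.2 ⟨sub_one_lt_ncfEval_cons hM a, ?_⟩
  rcases eq_or_ne M [] with rfl | hM₀
  · simp [ncfEval]
  · exact (ncfEval_cons_lt hM₀ hM a).le

theorem IsNCF.unique {r : ℚ} {L M : List ℤ} (hL : IsNCF r L) (hM : IsNCF r M) : L = M := by
  obtain ⟨hL₀, hL, rfl⟩ := hL
  obtain ⟨hM₀, hM, hLM⟩ := hM
  induction L generalizing M with
  | nil => exact absurd rfl hL₀
  | cons a L ih =>
    obtain ⟨b, M, rfl⟩ := List.exists_cons_of_ne_nil hM₀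
    have hLt : ∀ x ∈ L, 2 ≤ x := fun x hx => hL x (List.mem_cons_of_mem a hx)
    have hMt : ∀ x ∈ M, 2 ≤ x := fun x hx => hM x (List.mem_cons_of_mem b hx)
    obtain rfl : b = a := by
      rw [← ceil_ncfEval_cons hMt b, hLM, ceil_ncfEval_cons hLt a]
    rcases eq_or_ne L [] with rfl | hL₀ <;> rcases eq_or_ne M [] with rfl | hM₀
    · rfl
    · exact ((ncfEval_cons_lt hM₀ hMt b).ne hLM).elim
    · exact ((ncfEval_cons_lt hL₀ hLt b).ne' hLM).elim
    · rw [ncfEval_cons hL₀, ncfEval_cons hM₀, sub_right_inj, one_div, one_div, inv_inj] at hLM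
      rw [ih hL₀ hLt hM₀ hMt hLM]

theorem IsNCF.two_cons {y : ℚ} {C : List ℤ} (h : IsNCF y C) : IsNCF (2 - 1 / y) (2 :: C) := by
  obtain ⟨hC₀, hC, rfl⟩ := h
  refine ⟨List.cons_ne_nil 2 C, ?_, by rw [ncfEval_cons hC₀]; norm_num⟩
  simpa using hC

theorem IsNCF.add_one_cons {y : ℚ} {c : ℤ} {u : List ℤ} (h : IsNCF y (c :: u)) :
    IsNCF (y + 1) ((c + 1) :: u) := by
  obtain ⟨-, hC, rfl⟩ := h
  refine ⟨List.cons_ne_nil _ u, ?_, ncfEval_add_one_cons c u⟩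
  simp only [List.mem_cons, forall_eq_or_imp] at hC ⊢
  exact ⟨by omega, hC.2⟩

theorem IsNCF.exists_dual {x : ℚ} {A : List ℤ} (hA : IsNCF x A) :
    ∃ C, IsNCF (x / (x - 1)) C ∧ (C.length : ℤ) = A.sum - 2 * A.length + 1 := by
  obtain ⟨hA₀, hA, rfl⟩ := hA
  induction A with
  | nil => exact absurd rfl hA₀
  | cons a M ih =>
    have hM : ∀ b ∈ M, 2 ≤ b := fun b hb => hA b (List.mem_cons_of_mem a hb)
    have ha : 2 ≤ a := hA a List.mem_cons_self
    clear hA hA₀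
    induction a, ha using Int.leInduction with
    | base =>
      rcases eq_or_ne M [] with rfl | hM₀
      · exact ⟨[2], ⟨by simp, by simp, by norm_num [ncfEval]⟩, by simp⟩
      obtain ⟨C, hC, hlen⟩ := ih hM₀ hM
      obtain ⟨c, u, rfl⟩ := List.exists_cons_of_ne_nil hC.1
      refine ⟨(c + 1) :: u, ?_, ?_⟩
      · have hy := one_lt_ncfEval hM₀ hM
        rw [ncfEval_cons hM₀, Int.cast_ofNat,
          two_sub_inv_div_sub_one (by positivity) (sub_ne_zero.2 hy.ne')]
        exact hC.add_one_cons
      · simp only [List.length_cons, List.sum_cons] at hlen ⊢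
        push_cast at hlen ⊢
        linarith
    | succ a ha ih' =>
      obtain ⟨C, hC, hlen⟩ := ih'
      refine ⟨2 :: C, ?_, ?_⟩
      · have hy : (1 : ℚ) < ncfEval (a :: M) := by
          have : (2 : ℚ) ≤ a := by exact_mod_cast ha
          linarith [sub_one_lt_ncfEval_cons hM a]
        rw [ncfEval_add_one_cons, add_one_div_add_one_sub_one (zero_lt_one.trans hy).ne']
        exact hC.two_cons
      · simp only [List.length_cons, List.sum_cons] at hlen ⊢
        push_cast at hlen ⊢
        linarith

theorem stmt13_general (p q : ℕ) (hq : 0 < q)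
    (A C : List ℤ) (hA : IsNCF ((p : ℚ) / q) A) (hC : IsNCF ((p : ℚ) / (p - q)) C) :
    (C.length : ℤ) = (A.map (fun a => a - 1)).sum - A.length + 1 := by
  obtain ⟨D, hD, hlen⟩ := hA.exists_dual
  have hq₀ : (q : ℚ) ≠ 0 := by positivity
  rw [div_sub_one hq₀, div_div_div_cancel_right₀ hq₀] at hD
  have hsum : (A.map (fun a => a - 1)).sum = A.sum - A.length := by
    simp [sub_eq_add_neg, List.sum_map_add]
  rw [hC.unique hD, hlen, hsum]
  ring

theorem stmt13 (p q : ℕ) (hq : 0 < q) (hqp : q < p) (hcop : Nat.Coprime p q)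
    (A C : List ℤ) (hA : IsNCF ((p : ℚ) / q) A) (hC : IsNCF ((p : ℚ) / (p - q)) C) :
    (C.length : ℤ) = (A.map (fun a => a - 1)).sum - A.length + 1 :=
  stmt13_general p q hq A C hA hC
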